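/- arXiv:math/0104032 — 3 statements merged into one kernel-verified Lean document; each statement's English description precedes it below -/
import Mathlib

section
/- Let G = PGL_n(K) for a nonarchimedean local field K, let T be the diagonal torus, N its normalizer, and Φ = {a_{ij} : i ≠ j} the root system with a_{ij} = χ_i − χ_j. For a = a_{ij}, let U_a ⊂ G be the root subgroup of unipotent matrices with a single off-diagonal entry at position (i,j), and ψ_a : U_a → ℤ ∪ {∞} the map sending such a matrix u with entry u_{ij} to v(u_{ij}). Then for every n ∈ N with image w̄ in the Weyl group W = N/T and every s ∈ ℝ, one has n U_{a,s} n^{-1} = U_{w̄(a), s + a(ν(n^{-1})(0))}, where U_{a,s} = {u ∈ U_a : ψ_a(u) ≥ s} and ν : N → Aff(Λ) is the standard affine action of N on the apartment Λ. -/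
open scoped Classical

variable {K : Type*}

/-- The extended valuation `K → ℤ ∪ {∞}` (with values in `EReal`) attached to a
discrete valuation `v : Kˣ → ℤ`, sending `0` to `∞`. -/
noncomputable def extVal [Field K] (v : Kˣ →* Multiplicative ℤ) (ω : K) : EReal :=
  if h : ω = 0 then ⊤ else (((Multiplicative.toAdd (v (Units.mk0 ω h)) : ℤ) : ℝ) : EReal)

/-- The unipotent element `u = 1 + ω·E_{ij}` of the root group `U_{a_{ij}}`,
realized as a matrix. -/
def rootElem [Field K] (n : ℕ) (i j : Fin n) (ω : K) : Matrix (Fin n) (Fin n) K :=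
  1 + ω • Matrix.single i j 1

/-- The filtration subgroup `U_{a,s} = { u ∈ U_a : ψ_a(u) ≥ s }` of the root group
`U_a`, `a = a_{ij}`, where `ψ_a(1 + ω E_{ij}) = v(ω)`. -/
noncomputable def rootFiltration [Field K] (v : Kˣ →* Multiplicative ℤ) (n : ℕ)
    (i j : Fin n) (s : ℝ) : Set (Matrix (Fin n) (Fin n) K) :=
  {m | ∃ ω : K, m = rootElem n i j ω ∧ (s : EReal) ≤ extVal v ω}

/-- The monomial matrix `n = t·p` with torus part the diagonal entries `d` and
Weyl part the permutation `σ` (its `(k,l)` entry is `d k` if `k = σ l`, else `0`). -/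
def monomialMat [Field K] (n : ℕ) (d : Fin n → Kˣ) (σ : Equiv.Perm (Fin n)) :
    Matrix (Fin n) (Fin n) K :=
  Matrix.of fun k l => if k = σ l then (d k : K) else 0

/-- The inverse of the monomial matrix above. -/
def monomialMatInv [Field K] (n : ℕ) (d : Fin n → Kˣ) (σ : Equiv.Perm (Fin n)) :
    Matrix (Fin n) (Fin n) K :=
  Matrix.of fun k l => if l = σ k then ((d l)⁻¹ : Kˣ) else 0

lemma std_conj_apply [Field K] {n : ℕ} (A B : Matrix (Fin n) (Fin n) K) (i j k l : Fin n) :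
    (A * Matrix.single i j (1 : K) * B) k l = A k i * B j l := by
  simp [Matrix.mul_apply, Matrix.single, mul_ite, ite_mul, mul_zero, zero_mul,
    mul_one, Finset.sum_ite_eq, Finset.sum_ite_eq', Finset.mul_sum, ite_and]

lemma monomial_mul_inv [Field K] (n : ℕ) (d : Fin n → Kˣ) (σ : Equiv.Perm (Fin n)) :
    monomialMat n d σ * monomialMatInv n d σ = 1 := by
  ext k l
  have h : (monomialMat n d σ * monomialMatInv n d σ) k l
      = ∑ b, (fun b => (if k = b then (d k : K) else 0) *
          (if l = b then (((d l)⁻¹ : Kˣ) : K) else 0)) (σ b) := by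
    simp [Matrix.mul_apply, monomialMat, monomialMatInv]
  rw [h, Equiv.sum_comp σ (fun b => (if k = b then (d k : K) else 0) *
      (if l = b then (((d l)⁻¹ : Kˣ) : K) else 0))]
  by_cases hkl : k = l
  · subst hkl
    simp [ite_mul, mul_ite, Finset.sum_ite_eq, Matrix.one_apply]
  · simp [ite_mul, mul_ite, Finset.sum_ite_eq, Matrix.one_apply, hkl, Ne.symm hkl]

lemma monomial_conj_std [Field K] (n : ℕ) (d : Fin n → Kˣ) (σ : Equiv.Perm (Fin n))
    (i j : Fin n) :
    monomialMat n d σ * Matrix.single i j (1 : K) * monomialMatInv n d σ =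
      ((d (σ i) : K) * ((d (σ j))⁻¹ : Kˣ)) • Matrix.single (σ i) (σ j) (1 : K) := by
  ext k l
  rw [std_conj_apply]
  simp only [monomialMat, monomialMatInv, Matrix.of_apply, Matrix.smul_apply,
    Matrix.single, smul_eq_mul]
  by_cases hk : k = σ i <;> by_cases hl : l = σ j <;>
    simp [hk, hl, eq_comm, Ne.symm]

lemma monomial_conj_rootElem [Field K] (n : ℕ) (d : Fin n → Kˣ) (σ : Equiv.Perm (Fin n))
    (i j : Fin n) (ω : K) :
    monomialMat n d σ * rootElem n i j ω * monomialMatInv n d σ =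
      rootElem n (σ i) (σ j) ((d (σ i) : K) * ((d (σ j))⁻¹ : Kˣ) * ω) := by
  simp only [rootElem, mul_add, add_mul, mul_one, monomial_mul_inv, Matrix.mul_smul,
    Matrix.smul_mul]
  rw [monomial_conj_std, smul_smul, mul_comm ω]

lemma extVal_unit_mul [Field K] (v : Kˣ →* Multiplicative ℤ) (c : Kˣ) (ω : K) (h : ω ≠ 0) :
    extVal v ((c : K) * ω) =
      (((Multiplicative.toAdd (v c) : ℤ) : ℝ) : EReal) + extVal v ω := by
  have h' : (c : K) * ω ≠ 0 := mul_ne_zero c.ne_zero h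
  rw [extVal, extVal, dif_neg h', dif_neg h]
  have hu : Units.mk0 ((c : K) * ω) h' = c * Units.mk0 ω h := by ext; simp
  rw [hu, map_mul]
  push_cast [toAdd_mul]
  rfl

/-- For `PGL_n(K)` with diagonal torus `T` and normalizer `N` (realized by monomial
matrices `n = t p`, `t = diag(d)`, `p` the permutation matrix of `σ`), conjugation
satisfies `n U_{a,s} n⁻¹ = U_{w̄(a), s + a(ν(n⁻¹)(0))}`, where for `a = a_{ij}` one
has `w̄(a) = a_{σ(i)σ(j)}` and `a(ν(n⁻¹)(0)) = v(d_{σ(i)}) − v(d_{σ(j)})`. -/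
theorem conjugation_root_filtration [Field K] (v : Kˣ →* Multiplicative ℤ)
    (n : ℕ) (d : Fin n → Kˣ) (σ : Equiv.Perm (Fin n))
    (i j : Fin n) (hij : i ≠ j) (s : ℝ) :
    (fun m => monomialMat n d σ * m * monomialMatInv n d σ) ''
        rootFiltration (K := K) v n i j s =
      rootFiltration (K := K) v n (σ i) (σ j)
        (s + ((Multiplicative.toAdd (v (d (σ i))) : ℤ) : ℝ)
           - ((Multiplicative.toAdd (v (d (σ j))) : ℤ) : ℝ)) := by
  set c : Kˣ := d (σ i) * (d (σ j))⁻¹ with hc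
  have hcK : (c : K) = (d (σ i) : K) * ((d (σ j))⁻¹ : Kˣ) := by simp [hc]
  have hcv : ((Multiplicative.toAdd (v c) : ℤ) : ℝ) =
      ((Multiplicative.toAdd (v (d (σ i))) : ℤ) : ℝ)
        - ((Multiplicative.toAdd (v (d (σ j))) : ℤ) : ℝ) := by
    rw [hc, map_mul, map_inv]
    push_cast [toAdd_mul, toAdd_inv]
    ring
  have key : ∀ ω : K, ((s + ((Multiplicative.toAdd (v (d (σ i))) : ℤ) : ℝ)
           - ((Multiplicative.toAdd (v (d (σ j))) : ℤ) : ℝ) : ℝ) : EReal) ≤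
        extVal v ((c : K) * ω) ↔ (s : EReal) ≤ extVal v ω := by
    intro ω
    by_cases h : ω = 0
    · subst h
      simp [extVal]
    · rw [extVal_unit_mul v c ω h, extVal, dif_neg h]
      rw [← EReal.coe_add, EReal.coe_le_coe_iff, EReal.coe_le_coe_iff, hcv]
      constructor <;> intro <;> linarith
  ext m
  simp only [Set.mem_image, rootFiltration, Set.mem_setOf_eq]
  constructor
  · rintro ⟨m', ⟨ω, rfl, hω⟩, rfl⟩
    refine ⟨(c : K) * ω, ?_, ?_⟩
    · rw [monomial_conj_rootElem, hcK]
    · rw [key]; exact hω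
  · rintro ⟨ω, rfl, hω⟩
    refine ⟨rootElem n i j ((c⁻¹ : Kˣ) * ω), ⟨(c⁻¹ : Kˣ) * ω, rfl, ?_⟩, ?_⟩
    · rw [← key]
      have hco : (c : K) * ((c⁻¹ : Kˣ) * ω) = ω := by
        rw [← mul_assoc, ← Units.val_mul, mul_inv_cancel]
        simp
      rw [hco]; exact hω
    · rw [monomial_conj_rootElem, ← hcK]
      have hco : (c : K) * ((c⁻¹ : Kˣ) * ω) = ω := by
        rw [← mul_assoc, ← Units.val_mul, mul_inv_cancel]
        simp
      rw [hco]
end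

section
/- Let Φ be the root system of type A_{n−1} in Λ* with roots a_{ij}, and for a nonempty subset Ω of the compactified apartment Λ̄ define f_Ω(a) = inf{ t : Ω ⊆ closure of { z ∈ Λ : a(z) ≥ −t } } ∈ ℝ ∪ {±∞}. If a, b ∈ Φ with a ≠ ±b and a+b ∈ Φ, and both f_Ω(a) and f_Ω(b) are real numbers, then f_Ω(a+b) ≤ f_Ω(a) + f_Ω(b). Moreover if f_Ω(a) = −∞ and f_Ω(b) ≠ ∞, then f_Ω(a+b) = −∞. -/
open Set Pointwise Topology Filter

namespace CompApp

variable {n : ℕ}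

/-- The component `Λ_I`: the quotient of the functions `I → ℝ` by the line of
constants (so `Λ_I = Σ_{i∈I} ℝ η_i^I` with the relation `Σ_{i∈I} η_i^I = 0`). -/
abbrev Comp (I : Finset (Fin n)) : Type :=
  (↥I → ℝ) ⧸ (Submodule.span ℝ {(1 : ↥I → ℝ)})

/-- quotient map onto a component -/
noncomputable def mkC (I : Finset (Fin n)) : (↥I → ℝ) →ₗ[ℝ] Comp I :=
  Submodule.mkQ _

/-- The apartment `Λ` itself, i.e. the component for `I = {1,…,n}`. -/
abbrev Apt (n : ℕ) : Type := Comp (Finset.univ : Finset (Fin n))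

/-- restriction of functions from `{1,…,n}` to `J` -/
def resL (J : Finset (Fin n)) :
    ((↥(Finset.univ : Finset (Fin n)) → ℝ)) →ₗ[ℝ] (↥J → ℝ) :=
  LinearMap.funLeft ℝ ℝ (fun j => ⟨j.1, Finset.mem_univ _⟩)

/-- The projection `r_J : Λ → Λ_J`, `Σ x_i η_i ↦ Σ_{i∈J} x_i η_i^J`. -/
noncomputable def resQ (J : Finset (Fin n)) : Apt n →ₗ[ℝ] Comp J :=
  Submodule.mapQ _ _ (resL J) (by
    rw [Submodule.span_le]
    intro x hx
    rw [Set.mem_singleton_iff] at hx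
    subst hx
    exact Submodule.mem_comap.mpr (Submodule.subset_span rfl))

variable [NeZero n]

/-- The compactified apartment `Λ̄ = ⋃_{∅≠I⊆{1,…,n}} Λ_I` as a set. -/
def CApt (n : ℕ) : Type := Σ I : {I : Finset (Fin n) // I.Nonempty}, Comp I.1

/-- The embedding `Λ ↪ Λ̄`. -/
def emb (z : Apt n) : CApt n := ⟨⟨Finset.univ, Finset.univ_nonempty⟩, z⟩

/-- The point of the boundary component `Λ_I` inside `Λ̄`. -/
def embC (I : Finset (Fin n)) (hI : I.Nonempty) (y : Comp I) : CApt n := ⟨⟨I, hI⟩, y⟩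

/-- The cone `D_I = Σ_{i∉I} ℝ_{≥0}(−η_i) ⊆ Λ`. -/
noncomputable def cone (I : Finset (Fin n)) : Set (Apt n) :=
  (mkC _) '' {x | (∀ l : ↥(Finset.univ : Finset (Fin n)), (l : Fin n) ∈ I → x l = 0) ∧
    ∀ l : ↥(Finset.univ : Finset (Fin n)), (l : Fin n) ∉ I → x l ≤ 0}

/-- The basic open set `C_U^I = ⋃_{I ⊆ J} r_J(U + D_I) ⊆ Λ̄`. -/
noncomputable def CUI (U : Set (Apt n)) (I : Finset (Fin n)) : Set (CApt n) :=
  {p | I ⊆ p.1.1 ∧ p.2 ∈ resQ p.1.1 '' (U + cone I)}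

/-- Boundedness for subsets of the apartment `Λ`. -/
def BoundedA (U : Set (Apt n)) : Prop :=
  ∃ t : Set (↥(Finset.univ : Finset (Fin n)) → ℝ),
    Bornology.IsBounded t ∧ U ⊆ (mkC _) '' t

/-- The topology of `Λ̄`: generated by the open subsets of `Λ` together with the
sets `C_U^I` for nonempty proper `I` and bounded open `U ⊆ Λ`. -/
noncomputable instance : TopologicalSpace (CApt n) :=
  TopologicalSpace.generateFrom
    ({s | ∃ U : Set (Apt n), IsOpen U ∧ s = emb '' U} ∪
     {s | ∃ (U : Set (Apt n)) (I : Finset (Fin n)), I.Nonempty ∧ I ≠ Finset.univ ∧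
        IsOpen U ∧ BoundedA U ∧ s = CUI U I})

/-- The root `a_{ij} = χ_i − χ_j` as a linear functional on `Λ`. -/
noncomputable def aFun (i j : Fin n) : Apt n →ₗ[ℝ] ℝ :=
  Submodule.liftQ _
    (LinearMap.proj (⟨i, Finset.mem_univ i⟩ : ↥(Finset.univ : Finset (Fin n))) -
      LinearMap.proj ⟨j, Finset.mem_univ j⟩) (by
    rw [Submodule.span_le]
    intro x hx
    rw [Set.mem_singleton_iff] at hx
    subst hx
    simp [LinearMap.mem_ker])

/-- The root `b_{ij}` of the component `Λ_I` (for `i, j ∈ I`). -/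
noncomputable def bFun (I : Finset (Fin n)) (i j : ↥I) : Comp I →ₗ[ℝ] ℝ :=
  Submodule.liftQ _
    (LinearMap.proj (R := ℝ) (φ := fun _ : ↥I => ℝ) i -
      LinearMap.proj (R := ℝ) (φ := fun _ : ↥I => ℝ) j) (by
    rw [Submodule.span_le]
    intro x hx
    rw [Set.mem_singleton_iff] at hx
    subst hx
    simp [LinearMap.mem_ker])

/-- The closure in `Λ̄` of the half-space `{ z ∈ Λ : a_{ij}(z) ≥ s }`. -/
noncomputable def halfCl (i j : Fin n) (s : ℝ) : Set (CApt n) :=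
  closure (emb '' {z : Apt n | s ≤ aFun i j z})

/-- `f_Ω(a) = inf{ t : Ω ⊆ closure{ z ∈ Λ : a(z) ≥ −t } } ∈ ℝ ∪ {±∞}`,
for `a = a_{ij}` (with `inf ∅ = +∞`). -/
noncomputable def fO (Ω : Set (CApt n)) (i j : Fin n) : EReal :=
  sInf {t : EReal | ∃ s : ℝ, t = (s : EReal) ∧ Ω ⊆ halfCl i j (-s)}


set_option linter.unusedSectionVars false

section Infra

variable {n : ℕ} [NeZero n]

local notation "UF" => (Finset.univ : Finset (Fin n))

/-- the defining set of the cone -/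
def coneSet (I : Finset (Fin n)) : Set (↥UF → ℝ) :=
  {x | (∀ l : ↥UF, (l : Fin n) ∈ I → x l = 0) ∧ ∀ l : ↥UF, (l : Fin n) ∉ I → x l ≤ 0}

lemma cone_def (I : Finset (Fin n)) : cone I = mkC UF '' coneSet I := rfl

lemma coneSet_zero (I : Finset (Fin n)) : (0 : ↥UF → ℝ) ∈ coneSet I :=
  ⟨fun _ _ => rfl, fun _ _ => le_refl 0⟩

lemma mkC_surj (I : Finset (Fin n)) : Function.Surjective (mkC I) :=
  Submodule.mkQ_surjective _

lemma mkC_eq_iff {I : Finset (Fin n)} {x y : ↥I → ℝ} :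
    mkC I x = mkC I y ↔ ∃ t : ℝ, ∀ l, x l = y l + t := by
  constructor
  · intro h
    have := (Submodule.Quotient.eq (R := ℝ) _).mp h
    rw [Submodule.mem_span_singleton] at this
    obtain ⟨t, ht⟩ := this
    exact ⟨t, fun l => by have := congrFun ht l; simp at this ⊢; linarith⟩
  · rintro ⟨t, ht⟩
    refine ((Submodule.Quotient.eq (R := ℝ) _).mpr ?_)
    rw [Submodule.mem_span_singleton]
    exact ⟨t, by funext l; simp [ht l]⟩

lemma aFun_mk (i j : Fin n) (x : ↥UF → ℝ) :
    aFun i j (mkC UF x) = x ⟨i, Finset.mem_univ i⟩ - x ⟨j, Finset.mem_univ j⟩ := rfl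

lemma bFun_mk (I : Finset (Fin n)) (i j : ↥I) (x : ↥I → ℝ) :
    bFun I i j (mkC I x) = x i - x j := rfl

lemma resL_apply (J : Finset (Fin n)) (x : ↥UF → ℝ) (l : ↥J) :
    resL J x l = x ⟨l.1, Finset.mem_univ _⟩ := rfl

lemma resQ_mk (J : Finset (Fin n)) (x : ↥UF → ℝ) :
    resQ J (mkC UF x) = mkC J (resL J x) := rfl

lemma resQ_univ (z : Apt n) : resQ UF z = z := by
  obtain ⟨x, rfl⟩ := mkC_surj UF z
  rw [resQ_mk]
  congr 1

lemma emb_inj : Function.Injective (emb (n := n)) := by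
  intro a b h
  injection h

lemma mem_add_cone {U : Set (Apt n)} {I : Finset (Fin n)} {z : Apt n} :
    z ∈ U + cone I ↔ ∃ x : ↥UF → ℝ, mkC UF x ∈ U ∧ ∃ d ∈ coneSet I, z = mkC UF (x + d) := by
  constructor
  · rintro ⟨u, hu, v, hv, rfl⟩
    obtain ⟨x, rfl⟩ := mkC_surj UF u
    obtain ⟨d, hd, rfl⟩ := hv
    exact ⟨x, hu, d, hd, (map_add _ _ _).symm⟩
  · rintro ⟨x, hx, d, hd, rfl⟩
    exact ⟨mkC UF x, hx, mkC UF d, ⟨d, hd, rfl⟩, (map_add _ _ _).symm⟩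

lemma cont_aFun (i j : Fin n) : Continuous (aFun i j) := by
  refine (QuotientAddGroup.isOpenQuotientMap_mk).continuous_comp_iff.mp ?_
  have : (aFun i j) ∘ (QuotientAddGroup.mk (s := (Submodule.span ℝ {(1 : ↥UF → ℝ)}).toAddSubgroup))
      = fun x : ↥UF → ℝ => x ⟨i, Finset.mem_univ i⟩ - x ⟨j, Finset.mem_univ j⟩ := rfl
  change Continuous (fun x : ↥UF → ℝ => x ⟨i, Finset.mem_univ i⟩ - x ⟨j, Finset.mem_univ j⟩)
  exact (continuous_apply _).sub (continuous_apply _)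

lemma aFun_split (i j k : Fin n) (z : Apt n) :
    aFun i j z + aFun j k z = aFun i k z := by
  obtain ⟨x, rfl⟩ := mkC_surj UF z
  simp [aFun_mk]

lemma isOpenMap_mkC : IsOpenMap (mkC UF : (↥UF → ℝ) → Apt n) :=
  QuotientAddGroup.isOpenMap_coe

end Infra

attribute [-instance] instTopologicalSpaceSigma

section Topo

variable {n : ℕ} [NeZero n]

local notation "UF" => (Finset.univ : Finset (Fin n))

/-- the generating set of the topology -/
def gens (n : ℕ) [NeZero n] : Set (Set (CApt n)) :=
  {s | ∃ U : Set (Apt n), IsOpen U ∧ s = emb '' U} ∪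
  {s | ∃ (U : Set (Apt n)) (I : Finset (Fin n)), I.Nonempty ∧ I ≠ Finset.univ ∧
    IsOpen U ∧ BoundedA U ∧ s = CUI U I}

lemma topo_eq : (inferInstance : TopologicalSpace (CApt n)) =
    TopologicalSpace.generateFrom (gens n) := rfl

lemma isOpen_gens {s : Set (CApt n)} (h : s ∈ gens n) : IsOpen s :=
  TopologicalSpace.GenerateOpen.basic _ h

lemma basisB : TopologicalSpace.IsTopologicalBasis
    ((fun f => Set.sInter f) '' { f : Set (Set (CApt n)) | f.Finite ∧ f ⊆ gens n }) :=
  TopologicalSpace.isTopologicalBasis_of_subbasis topo_eq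

/-- L1: interior points of the closure of an embedded half-space -/
lemma emb_mem_halfCl {i j : Fin n} {s : ℝ} {z : Apt n} (h : emb z ∈ halfCl i j s) :
    s ≤ aFun i j z := by
  by_contra hlt
  push_neg at hlt
  have hU : IsOpen ((aFun i j) ⁻¹' (Set.Iio s)) := (isOpen_Iio).preimage (cont_aFun i j)
  have hopen : IsOpen (emb '' ((aFun i j) ⁻¹' (Set.Iio s))) :=
    isOpen_gens (Or.inl ⟨_, hU, rfl⟩)
  have h' : emb z ∈ closure (emb '' {z : Apt n | s ≤ aFun i j z}) := h
  obtain ⟨q, hq1, hq2⟩ := (mem_closure_iff.mp h') _ hopen ⟨z, hlt, rfl⟩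
  obtain ⟨w1, hw1, hwe1⟩ := hq1
  obtain ⟨w2, hw2, hwe2⟩ := hq2
  have : w1 = w2 := emb_inj (hwe1.trans hwe2.symm)
  subst this
  exact lt_irrefl s (lt_of_le_of_lt hw2 hw1)

/-- L2: separating neighborhoods at boundary points -/
lemma not_mem_halfCl (I : Finset (Fin n)) (hI : I.Nonempty) (hIu : I ≠ Finset.univ)
    (c : ↥UF → ℝ) (i j : Fin n) (hj : j ∈ I) (s : ℝ)
    (hlt : c ⟨i, Finset.mem_univ i⟩ - c ⟨j, Finset.mem_univ j⟩ < s) :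
    embC I hI (mkC I (resL I c)) ∉ halfCl i j s := by
  intro hmem
  set ci := c ⟨i, Finset.mem_univ i⟩
  set cj := c ⟨j, Finset.mem_univ j⟩
  set ε := (s - (ci - cj)) / 2 with hε
  have hεpos : 0 < ε := by simp [hε]; linarith
  set U : Set (Apt n) := mkC UF '' Metric.ball c ε with hUdef
  have hUopen : IsOpen U := isOpenMap_mkC _ Metric.isOpen_ball
  have hUb : BoundedA U := ⟨Metric.ball c ε, Metric.isBounded_ball, le_refl _⟩
  have hVopen : IsOpen (CUI U I) :=
    isOpen_gens (Or.inr ⟨U, I, hI, hIu, hUopen, hUb, rfl⟩)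
  have hpV : embC I hI (mkC I (resL I c)) ∈ CUI U I := by
    refine ⟨Finset.Subset.refl I, mkC UF c, ?_, rfl⟩
    refine mem_add_cone.mpr ⟨c, ⟨c, Metric.mem_ball_self hεpos, rfl⟩, 0, coneSet_zero I, by simp⟩
  have hmem' : embC I hI (mkC I (resL I c)) ∈
      closure (emb '' {z : Apt n | s ≤ aFun i j z}) := hmem
  obtain ⟨q, hq1, hq2⟩ := (mem_closure_iff.mp hmem') _ hVopen hpV
  obtain ⟨w, hw, hwe⟩ := hq2
  subst hwe
  obtain ⟨hsub, z0, hz0, hz0e⟩ := hq1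
  have hz0w : z0 = w := by rw [← resQ_univ z0]; exact hz0e
  subst hz0w
  obtain ⟨x, hxU, d, hd, rfl⟩ := mem_add_cone.mp hz0
  obtain ⟨x0, hx0ball, hx0e⟩ := hxU
  obtain ⟨t, ht⟩ := mkC_eq_iff.mp hx0e
  rw [Set.mem_setOf_eq, aFun_mk] at hw
  have hdj : d ⟨j, Finset.mem_univ j⟩ = 0 := hd.1 _ hj
  have hdi : d ⟨i, Finset.mem_univ i⟩ ≤ 0 := by
    by_cases hi : i ∈ I
    · exact le_of_eq (hd.1 _ hi)
    · exact hd.2 _ hi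
  have hbi : |x0 ⟨i, Finset.mem_univ i⟩ - ci| < ε := by
    have := lt_of_le_of_lt (dist_le_pi_dist x0 c ⟨i, Finset.mem_univ i⟩) hx0ball
    rwa [Real.dist_eq] at this
  have hbj : |x0 ⟨j, Finset.mem_univ j⟩ - cj| < ε := by
    have := lt_of_le_of_lt (dist_le_pi_dist x0 c ⟨j, Finset.mem_univ j⟩) hx0ball
    rwa [Real.dist_eq] at this
  have hxi := ht ⟨i, Finset.mem_univ i⟩
  have hxj := ht ⟨j, Finset.mem_univ j⟩
  simp only [Pi.add_apply] at hw
  rw [abs_lt] at hbi hbj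
  linarith

end Topo

section Core

variable {n : ℕ} [NeZero n]

local notation "UF" => (Finset.univ : Finset (Fin n))

lemma core_mem_closure (I : Finset (Fin n)) (hI : I.Nonempty) (hIu : I ≠ Finset.univ)
    (c : ↥UF → ℝ) (S : Set (Apt n))
    (hS : ∀ w : ↥UF → ℝ, (∀ l : ↥UF, (l : Fin n) ∈ I → w l = c l) →
      ∃ d ∈ coneSet I, mkC UF (w + d) ∈ S) :
    embC I hI (mkC I (resL I c)) ∈ closure (emb '' S) := by
  rw [basisB.mem_closure_iff]
  rintro o ⟨f, ⟨hfin, hsub⟩, rfl⟩ hp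
  have hdata : ∀ g ∈ f, ∃ (J : Finset (Fin n)) (U : Set (Apt n)) (w x d : ↥UF → ℝ),
      J ⊆ I ∧ g = CUI U J ∧ (∀ l : ↥UF, (l : Fin n) ∈ I → w l = c l) ∧
      mkC UF x ∈ U ∧ d ∈ coneSet J ∧ w = x + d := by
    intro g hg
    have hpg : embC I hI (mkC I (resL I c)) ∈ g := Set.mem_sInter.mp hp g hg
    rcases hsub hg with ⟨U, hU, rfl⟩ | ⟨U, J, hJne, hJu, hUo, hUb, rfl⟩
    · obtain ⟨z, _, hze⟩ := hpg
      exfalso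
      apply hIu
      have h1 : (⟨Finset.univ, Finset.univ_nonempty⟩ : {I : Finset (Fin n) // I.Nonempty})
          = ⟨I, hI⟩ := congrArg Sigma.fst hze
      exact (congrArg Subtype.val h1).symm
    · obtain ⟨hJI, z, hz, hze⟩ := hpg
      obtain ⟨x, hxU, d, hd, rfl⟩ := mem_add_cone.mp hz
      rw [resQ_mk] at hze
      obtain ⟨t, ht⟩ := mkC_eq_iff.mp hze
      refine ⟨J, U, x + d - fun _ => t, x - fun _ => t, d, hJI, rfl, ?_, ?_, hd,
        by funext l; simp; ring⟩
      · intro l hl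
        have h2 := ht ⟨l.1, hl⟩
        simp only [resL_apply, Pi.add_apply, Pi.sub_apply] at h2 ⊢
        have h2' : x l + d l = c l + t := h2
        linarith [h2']
      · have h3 : mkC UF (x - fun _ => t) = mkC UF x :=
          mkC_eq_iff.mpr ⟨-t, fun l => by simp [sub_eq_add_neg]⟩
        rwa [h3]
  choose J U w x d hJI hgeq hwc hxU hdmem hwxd using hdata
  by_cases hfe : f = ∅
  · subst hfe
    obtain ⟨d0, hd0, hmem⟩ := hS c (fun _ _ => rfl)
    exact ⟨emb (mkC UF (c + d0)), by simp, ⟨_, hmem, rfl⟩⟩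
  · have hFne : hfin.toFinset.Nonempty := by
      rw [Set.Finite.toFinset_nonempty]; exact Set.nonempty_iff_ne_empty.mpr hfe
    have hFa : hfin.toFinset.attach.Nonempty := Finset.attach_nonempty_iff.mpr hFne
    set w0 : ↥UF → ℝ := fun l =>
      if (l : Fin n) ∈ I then c l
      else hfin.toFinset.attach.inf' hFa (fun g => w g.1 (hfin.mem_toFinset.mp g.2) l) with hw0
    have hw0I : ∀ l : ↥UF, (l : Fin n) ∈ I → w0 l = c l := fun l hl => if_pos hl
    obtain ⟨d', hd', hmemS⟩ := hS w0 hw0I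
    refine ⟨emb (mkC UF (w0 + d')), ?_, ⟨_, hmemS, rfl⟩⟩
    rw [Set.mem_sInter]
    intro g hg
    rw [hgeq g hg]
    refine ⟨Finset.subset_univ _, mkC UF (w0 + d'), ?_, resQ_univ _⟩
    refine mem_add_cone.mpr ⟨x g hg, hxU g hg,
      d g hg + (w0 - w g hg) + d', ⟨?_, ?_⟩, ?_⟩
    · intro l hl
      have hlI : (l : Fin n) ∈ I := hJI g hg hl
      simp only [Pi.add_apply, Pi.sub_apply, (hdmem g hg).1 l hl, hd'.1 l hlI,
        hw0I l hlI, hwc g hg l hlI]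
      ring
    · intro l hl
      have h1 : d g hg l ≤ 0 := (hdmem g hg).2 l hl
      have h2 : w0 l - w g hg l ≤ 0 := by
        by_cases hlI : (l : Fin n) ∈ I
        · rw [hw0I l hlI, hwc g hg l hlI]; simp
        · have he : w0 l = hfin.toFinset.attach.inf' hFa
              (fun g => w g.1 (hfin.mem_toFinset.mp g.2) l) := if_neg hlI
          rw [he, sub_nonpos]
          exact Finset.inf'_le _ (Finset.mem_attach _ ⟨g, hfin.mem_toFinset.mpr hg⟩)
      have h3 : d' l ≤ 0 := by
        by_cases hlI : (l : Fin n) ∈ I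
        · exact le_of_eq (hd'.1 l hlI)
        · exact hd'.2 l hlI
      simp only [Pi.add_apply, Pi.sub_apply]
      linarith
    · have h5 : w0 + d' = x g hg + (d g hg + (w0 - w g hg) + d') := by
        funext l
        have h4 := congrFun (hwxd g hg) l
        simp only [Pi.add_apply, Pi.sub_apply] at h4 ⊢
        linarith
      rw [h5]
end Core

section Key

variable {n : ℕ} [NeZero n]

local notation "UF" => (Finset.univ : Finset (Fin n))

lemma halfCl_inter_subset (i j k : Fin n) (hij : i ≠ j) (hjk : j ≠ k) (hik : i ≠ k)
    (s r : ℝ) : halfCl i j s ∩ halfCl j k r ⊆ halfCl i k (s + r) := by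
  rintro p ⟨h1, h2⟩
  obtain ⟨⟨I, hI⟩, y⟩ := p
  by_cases hIu : I = Finset.univ
  · subst hIu
    have hpe : (⟨⟨Finset.univ, hI⟩, y⟩ : CApt n) = emb y := rfl
    rw [hpe] at h1 h2 ⊢
    have ha := emb_mem_halfCl h1
    have hb := emb_mem_halfCl h2
    refine subset_closure ⟨y, ?_, rfl⟩
    rw [Set.mem_setOf_eq, ← aFun_split i j k]
    linarith
  · obtain ⟨y0, rfl⟩ := mkC_surj I y
    have hpe : (⟨⟨I, hI⟩, mkC I y0⟩ : CApt n) = embC I hI (mkC I y0) := rfl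
    rw [hpe] at h1 h2 ⊢
    set cb : ↥UF → ℝ := fun l => if h : (l : Fin n) ∈ I then y0 ⟨l, h⟩ else 0 with hcb
    have hres : resL I cb = y0 := by
      funext l
      exact dif_pos l.2
    by_cases hk : k ∈ I
    · -- Step A : j ∈ I
      have hjI : j ∈ I := by
        by_contra hjn
        set c' : ↥UF → ℝ := fun l => if h : (l : Fin n) ∈ I then y0 ⟨l, h⟩
          else if (l : Fin n) = j then y0 ⟨k, hk⟩ + r - 1 else 0 with hc'
        have hres' : resL I c' = y0 := by
          funext l
          exact dif_pos l.2
        refine not_mem_halfCl I hI hIu c' j k hk r ?_ (by rwa [hres'])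
        have e1 : c' ⟨j, Finset.mem_univ j⟩ = y0 ⟨k, hk⟩ + r - 1 := by
          rw [hc']; simp only; rw [dif_neg hjn]; simp
        have e2 : c' ⟨k, Finset.mem_univ k⟩ = y0 ⟨k, hk⟩ := dif_pos hk
        rw [e1, e2]; linarith
      -- Step B
      have hbjk : r ≤ y0 ⟨j, hjI⟩ - y0 ⟨k, hk⟩ := by
        by_contra hlt
        push_neg at hlt
        refine not_mem_halfCl I hI hIu cb j k hk r ?_ (by rwa [hres])
        have e1 : cb ⟨j, Finset.mem_univ j⟩ = y0 ⟨j, hjI⟩ := dif_pos hjI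
        have e2 : cb ⟨k, Finset.mem_univ k⟩ = y0 ⟨k, hk⟩ := dif_pos hk
        rw [e1, e2]; linarith
      -- Step C
      have hiI : i ∈ I := by
        by_contra hin
        set c' : ↥UF → ℝ := fun l => if h : (l : Fin n) ∈ I then y0 ⟨l, h⟩
          else if (l : Fin n) = i then y0 ⟨j, hjI⟩ + s - 1 else 0 with hc'
        have hres' : resL I c' = y0 := by
          funext l
          exact dif_pos l.2
        refine not_mem_halfCl I hI hIu c' i j hjI s ?_ (by rwa [hres'])
        have e1 : c' ⟨i, Finset.mem_univ i⟩ = y0 ⟨j, hjI⟩ + s - 1 := by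
          rw [hc']; simp only; rw [dif_neg hin]; simp
        have e2 : c' ⟨j, Finset.mem_univ j⟩ = y0 ⟨j, hjI⟩ := dif_pos hjI
        rw [e1, e2]; linarith
      have hbij : s ≤ y0 ⟨i, hiI⟩ - y0 ⟨j, hjI⟩ := by
        by_contra hlt
        push_neg at hlt
        refine not_mem_halfCl I hI hIu cb i j hjI s ?_ (by rwa [hres])
        have e1 : cb ⟨i, Finset.mem_univ i⟩ = y0 ⟨i, hiI⟩ := dif_pos hiI
        have e2 : cb ⟨j, Finset.mem_univ j⟩ = y0 ⟨j, hjI⟩ := dif_pos hjI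
        rw [e1, e2]; linarith
      -- Step D : conclude
      have hcore := core_mem_closure I hI hIu cb {z : Apt n | s + r ≤ aFun i k z} ?_
      · rw [hres] at hcore
        exact hcore
      · intro w hw
        refine ⟨0, coneSet_zero I, ?_⟩
        rw [Set.mem_setOf_eq, add_zero, aFun_mk]
        have e1 : w ⟨i, Finset.mem_univ i⟩ = cb ⟨i, Finset.mem_univ i⟩ := hw _ hiI
        have e2 : w ⟨k, Finset.mem_univ k⟩ = cb ⟨k, Finset.mem_univ k⟩ := hw _ hk
        have e3 : cb ⟨i, Finset.mem_univ i⟩ = y0 ⟨i, hiI⟩ := dif_pos hiI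
        have e4 : cb ⟨k, Finset.mem_univ k⟩ = y0 ⟨k, hk⟩ := dif_pos hk
        rw [e1, e2, e3, e4]; linarith
    · -- k ∉ I : push the k-th coordinate down
      have hcore := core_mem_closure I hI hIu cb {z : Apt n | s + r ≤ aFun i k z} ?_
      · rw [hres] at hcore
        exact hcore
      · intro w hw
        set t := max 0 (s + r - (w ⟨i, Finset.mem_univ i⟩ - w ⟨k, Finset.mem_univ k⟩)) with htd
        refine ⟨fun l => if (l : Fin n) = k then -t else 0, ⟨?_, ?_⟩, ?_⟩
        · intro l hl
          have : (l : Fin n) ≠ k := fun h => hk (h ▸ hl)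
          simp [this]
        · intro l _
          by_cases hlk : (l : Fin n) = k
          · simp only [if_pos hlk]
            simp [htd]
          · simp [hlk]
        · rw [Set.mem_setOf_eq, aFun_mk]
          simp only [Pi.add_apply]
          simp only [if_false, if_true]
          rw [if_neg hik]
          have := le_max_right 0 (s + r - (w ⟨i, Finset.mem_univ i⟩ - w ⟨k, Finset.mem_univ k⟩))
          rw [← htd] at this
          linarith

end Key

/-- For roots ... (real statement in post.lean, here we develop the proof body) -/
theorem fO_add_le' {n : ℕ} [NeZero n] (Ω : Set (CApt n)) (hΩ : Ω.Nonempty)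
    (i j k : Fin n) (hij : i ≠ j) (hjk : j ≠ k) (hik : i ≠ k) :
    ((∃ sa : ℝ, fO Ω i j = (sa : EReal)) → (∃ sb : ℝ, fO Ω j k = (sb : EReal)) →
      fO Ω i k ≤ fO Ω i j + fO Ω j k) ∧
    (fO Ω i j = ⊥ → fO Ω j k ≠ ⊤ → fO Ω i k = ⊥) := by
  have key : ∀ s r : ℝ, Ω ⊆ halfCl i j (-s) → Ω ⊆ halfCl j k (-r) →
      ((s + r : ℝ) : EReal) ∈ {t : EReal | ∃ u : ℝ, t = (u : EReal) ∧ Ω ⊆ halfCl i k (-u)} := by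
    intro s r hs hr
    have h := halfCl_inter_subset i j k hij hjk hik (-s) (-r)
    have e : -s + -r = -(s + r) := by ring
    rw [e] at h
    exact ⟨s + r, rfl, fun p hp => h ⟨hs hp, hr hp⟩⟩
  constructor
  · rintro ⟨sa, ha⟩ ⟨sb, hb⟩
    rw [ha, hb]
    refine le_of_forall_gt_imp_ge_of_dense ?_
    intro cE hcE
    have hm : ∃ m : ℝ, sa + sb < m ∧ (m : EReal) ≤ cE := by
      induction cE using EReal.rec with
      | bot => rw [← EReal.coe_add] at hcE; exact absurd hcE (by simp)
      | coe m =>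
        rw [← EReal.coe_add] at hcE
        exact ⟨m, by exact_mod_cast hcE, le_refl _⟩
      | top => exact ⟨sa + sb + 1, by linarith, le_top⟩
    obtain ⟨m, hm1, hm2⟩ := hm
    set ε := (m - sa - sb) / 2 with hε
    have hεpos : 0 < ε := by simp [hε]; linarith
    have h1 : fO Ω i j < ((sa + ε : ℝ) : EReal) := by
      rw [ha]; exact_mod_cast EReal.coe_lt_coe_iff.mpr (by linarith)
    have h2 : fO Ω j k < ((sb + ε : ℝ) : EReal) := by
      rw [hb]; exact_mod_cast EReal.coe_lt_coe_iff.mpr (by linarith)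
    obtain ⟨t1, ⟨s1, rfl, hsub1⟩, hlt1⟩ := sInf_lt_iff.mp h1
    obtain ⟨t2, ⟨s2, rfl, hsub2⟩, hlt2⟩ := sInf_lt_iff.mp h2
    have hs1 : s1 < sa + ε := EReal.coe_lt_coe_iff.mp hlt1
    have hs2 : s2 < sb + ε := EReal.coe_lt_coe_iff.mp hlt2
    have hmem := key s1 s2 hsub1 hsub2
    have hle : fO Ω i k ≤ ((s1 + s2 : ℝ) : EReal) := sInf_le hmem
    refine le_trans hle (le_trans ?_ hm2)
    exact le_of_lt (EReal.coe_lt_coe_iff.mpr (by linarith))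
  · intro h1 h2
    have hne : {t : EReal | ∃ u : ℝ, t = (u : EReal) ∧ Ω ⊆ halfCl j k (-u)}.Nonempty := by
      by_contra h
      rw [Set.not_nonempty_iff_eq_empty] at h
      apply h2
      show sInf _ = ⊤
      rw [h, sInf_empty]
    obtain ⟨tb, rb, rfl, hrb⟩ := hne
    show sInf _ = ⊥
    rw [sInf_eq_bot]
    intro b hb
    have get : ∀ m : ℝ, ∃ a ∈ {t : EReal | ∃ u : ℝ, t = (u : EReal) ∧ Ω ⊆ halfCl i k (-u)},
        a < ((m : ℝ) : EReal) := by
      intro m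
      have hlt : fO Ω i j < ((m - rb : ℝ) : EReal) := by
        rw [h1]; exact EReal.bot_lt_coe _
      obtain ⟨t1, ⟨s1, rfl, hsub1⟩, hlt1⟩ := sInf_lt_iff.mp hlt
      have hs1 : s1 < m - rb := EReal.coe_lt_coe_iff.mp hlt1
      exact ⟨((s1 + rb : ℝ) : EReal), key s1 rb hsub1 hrb,
        EReal.coe_lt_coe_iff.mpr (by linarith)⟩
    induction b using EReal.rec with
    | bot => exact absurd hb (lt_irrefl _)
    | coe m => exact get m
    | top =>
      obtain ⟨a, hmem, hlt⟩ := get 0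
      exact ⟨a, hmem, lt_trans hlt (EReal.coe_lt_top 0)⟩

/-- For roots `a = a_{ij}`, `b = a_{jk}` of the `A_{n−1}` root system with
`a ≠ ±b` and `a + b = a_{ik} ∈ Φ` (i.e. `i, j, k` pairwise distinct) and a
nonempty subset `Ω` of the compactified apartment `Λ̄`: if `f_Ω(a)` and
`f_Ω(b)` are real then `f_Ω(a+b) ≤ f_Ω(a) + f_Ω(b)`; and if `f_Ω(a) = −∞`
and `f_Ω(b) ≠ ∞` then `f_Ω(a+b) = −∞`. -/
theorem fO_add_le {n : ℕ} [NeZero n] (Ω : Set (CApt n)) (hΩ : Ω.Nonempty)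
    (i j k : Fin n) (hij : i ≠ j) (hjk : j ≠ k) (hik : i ≠ k) :
    ((∃ sa : ℝ, fO Ω i j = (sa : EReal)) → (∃ sb : ℝ, fO Ω j k = (sb : EReal)) →
      fO Ω i k ≤ fO Ω i j + fO Ω j k) ∧
    (fO Ω i j = ⊥ → fO Ω j k ≠ ⊤ → fO Ω i k = ⊥) := by
  exact fO_add_le' Ω hΩ i j k hij hjk hik

end CompApp
end

section
/- Let (x_k) be a sequence in Λ̄ converging to x ∈ Λ̄, and let u_k ∈ U_{a,x_k} be elements converging in U_a to some u. Then u ∈ U_{a,x}. Equivalently, the set {(x,u) ∈ Λ̄ × U_a : ψ_a(u) ≥ f_x(a)} is sequentially closed. -/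
/-!
`p ↦ f_p(a)` is lower semicontinuous on `Λ̄`: if `s < f_p(a)` with `s` real, then `p` lies outside
the closed set `closure {z ∈ Λ : a(z) ≥ -s}`, and every point `q` of that open complement has
`f_q(a) ≥ s`. As `ψ_a` is continuous, `{(x, u) : f_x(a) ≤ ψ_a(u)}` is the preimage of the closed
epigraph of `p ↦ f_p(a)` under `(x, u) ↦ (x, ψ_a(u))`, hence closed.
-/

open Set Pointwise Topology Filter

namespace CompApp

variable {n : ℕ}

variable [NeZero n]

variable {i j : Fin n}

lemma halfCl_antitone : Antitone (halfCl (n := n) i j) :=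
  fun _ _ hst => closure_mono <| image_mono fun _ hz => hst.trans hz

lemma fO_le_coe_of_subset_halfCl {Ω : Set (CApt n)} {s : ℝ} (h : Ω ⊆ halfCl i j (-s)) :
    fO Ω i j ≤ s :=
  sInf_le ⟨s, rfl, h⟩

lemma subset_halfCl_of_fO_lt_coe {Ω : Set (CApt n)} {s : ℝ} (h : fO Ω i j < s) :
    Ω ⊆ halfCl i j (-s) := by
  obtain ⟨_, ⟨s', rfl, hΩ⟩, hs'⟩ := sInf_lt_iff.mp h
  exact hΩ.trans <| halfCl_antitone <| neg_le_neg <| EReal.coe_le_coe_iff.mp hs'.le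

lemma lowerSemicontinuous_fO_singleton :
    LowerSemicontinuous fun p : CApt n => fO {p} i j := by
  intro p y hy
  obtain ⟨s, hys, hsp⟩ := EReal.exists_between_coe_real hy
  have hp : p ∉ halfCl i j (-s) := fun h =>
    (fO_le_coe_of_subset_halfCl (singleton_subset_iff.mpr h)).not_gt hsp
  filter_upwards [isClosed_closure.isOpen_compl.mem_nhds hp] with q hq
  exact hys.trans_le <| not_lt.mp fun h => hq <| subset_halfCl_of_fO_lt_coe h rfl

theorem rootFiltration_sequentially_closed_general {K : Type*}
    [TopologicalSpace K]
    (v : K → EReal)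
    (hvcont : Continuous v)
    {n : ℕ} [NeZero n] (i j : Fin n)
    (x : ℕ → CApt n) (xlim : CApt n)
    (hx : Filter.Tendsto x Filter.atTop (nhds xlim))
    (u : ℕ → K) (ulim : K)
    (hu : Filter.Tendsto u Filter.atTop (nhds ulim))
    (hmem : ∀ k, fO {x k} i j ≤ v (u k)) :
    fO {xlim} i j ≤ v ulim := by
  have hclosed : IsClosed {p : CApt n × K | fO {p.1} i j ≤ v p.2} :=
    lowerSemicontinuous_fO_singleton.isClosed_epigraph.preimage
      (continuous_fst.prodMk (hvcont.comp continuous_snd))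
  exact hclosed.mem_of_tendsto (hx.prodMk_nhds hu) (Eventually.of_forall hmem)

/-- Let `(x_k)` be a sequence in `Λ̄` converging to `x`, and let
`u_k ∈ U_{a,x_k}` (i.e. `ψ_a(u_k) ≥ f_{x_k}(a)`) converge in the root group
`U_a ≅ K` to some `u`.  Then `u ∈ U_{a,x}`, i.e. `ψ_a(u) ≥ f_x(a)`:
the set `{(x,u) : ψ_a(u) ≥ f_x(a)}` is sequentially closed. -/
theorem rootFiltration_sequentially_closed {K : Type*} [Field K]
    [TopologicalSpace K]
    (v : K → EReal) (hv0 : ∀ ω : K, v ω = ⊤ ↔ ω = 0)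
    (hvdisc : ∀ ω : K, ω ≠ 0 → ∃ m : ℤ, v ω = ((m : ℝ) : EReal))
    (hvcont : Continuous v)
    {n : ℕ} [NeZero n] (i j : Fin n) (hij : i ≠ j)
    (x : ℕ → CApt n) (xlim : CApt n)
    (hx : Filter.Tendsto x Filter.atTop (nhds xlim))
    (u : ℕ → K) (ulim : K)
    (hu : Filter.Tendsto u Filter.atTop (nhds ulim))
    (hmem : ∀ k, fO {x k} i j ≤ v (u k)) :
    fO {xlim} i j ≤ v ulim :=
  rootFiltration_sequentially_closed_general v hvcont i j x xlim hx u ulim hu hmem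

end CompApp
end
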